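/- If σ ∈ L¹(ℝ^{2d}) is nonnegative and φ ∈ L²(ℝ^d), then the localization operator H_σ is a positive trace-class operator on L²(ℝ^d) with trace ‖σ‖₁ · ‖φ‖₂². -/

import Mathlib

open MeasureTheory Complex Real

noncomputable section

/-- Time side `ℝ^d`. -/
abbrev Rd (d : ℕ) := Fin d → ℝ
/-- Time-frequency plane `ℝ^{2d}`. -/
abbrev TF (d : ℕ) := (Fin d → ℝ) × (Fin d → ℝ)

/-- Euclidean dot product on `ℝ^d`. -/
def dotR {d : ℕ} (x y : Fin d → ℝ) : ℝ := ∑ i, x i * y i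

/-- Time-frequency shift `π(x,ω) f (t) = e^{2πi ω·t} f(t-x)`. -/
def tfShift {d : ℕ} (z : TF d) (f : Rd d → ℂ) : Rd d → ℂ :=
  fun t => Complex.exp (2 * Real.pi * Complex.I * (dotR z.2 t)) * f (t - z.1)

/-- The short-time Fourier transform `V_φ f (x,ω) = ∫ f(t) conj(φ(t-x)) e^{-2πi ω·t} dt`;
equivalently `V_φ f (z) = ⟨f, π(z) φ⟩`. -/
def STFT {d : ℕ} (φ f : Rd d → ℂ) (z : TF d) : ℂ :=
  ∫ t : Rd d, f t * (starRingEnd ℂ) (φ (t - z.1)) *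
    Complex.exp (-(2 * Real.pi * Complex.I * (dotR z.2 t)))

/-- The (math-convention, linear in the first slot) `L²` inner product of functions. -/
def innF {d : ℕ} (f g : Rd d → ℂ) : ℂ := ∫ t : Rd d, f t * (starRingEnd ℂ) (g t)

namespace LocAux
open scoped InnerProductSpace ComplexConjugate
variable {d : ℕ}

lemma contDot (z : TF d) : Continuous fun t : Rd d => dotR z.2 t := by
  unfold dotR
  exact continuous_finset_sum _ fun i _ => (continuous_const.mul (continuous_apply i))

lemma contExp (z : TF d) :
    Continuous fun t : Rd d => Complex.exp (2 * Real.pi * Complex.I * (dotR z.2 t)) :=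
  Complex.continuous_exp.comp (continuous_const.mul (Complex.continuous_ofReal.comp (contDot z)))

lemma norm_exp_dot (r : ℝ) :
    ‖Complex.exp (2 * Real.pi * Complex.I * (r : ℂ))‖ = 1 := by
  rw [Complex.norm_exp]
  norm_num [Complex.mul_re, Complex.mul_im]

lemma hmp (x : Rd d) : MeasurePreserving (fun t : Rd d => t - x) volume volume :=
  measurePreserving_sub_right volume x

lemma memLp_shift (φ : Lp ℂ 2 (volume : Measure (Rd d))) (z : TF d) :
    MemLp (tfShift z ⇑φ) 2 (volume : Measure (Rd d)) := by
  have hφ : MemLp (⇑φ ∘ fun t : Rd d => t - z.1) 2 volume :=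
    (Lp.memLp φ).comp_measurePreserving (hmp z.1)
  constructor
  · exact ((contExp z).aestronglyMeasurable).mul hφ.1
  · have : eLpNorm (tfShift z ⇑φ) 2 volume = eLpNorm (⇑φ ∘ fun t : Rd d => t - z.1) 2 volume := by
      apply eLpNorm_congr_norm_ae
      filter_upwards with t
      simp [tfShift, Function.comp, norm_exp_dot]
    rw [this]
    exact hφ.2

def piSh (φ : Lp ℂ 2 (volume : Measure (Rd d))) (z : TF d) : Lp ℂ 2 (volume : Measure (Rd d)) :=
  (memLp_shift φ z).toLp _

lemma norm_piSh (φ : Lp ℂ 2 (volume : Measure (Rd d))) (z : TF d) : ‖piSh φ z‖ = ‖φ‖ := by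
  rw [piSh, Lp.norm_toLp, Lp.norm_def]
  congr 1
  have : eLpNorm (tfShift z ⇑φ) 2 volume = eLpNorm (⇑φ ∘ fun t : Rd d => t - z.1) 2 volume := by
    apply eLpNorm_congr_norm_ae
    filter_upwards with t
    simp [tfShift, Function.comp, norm_exp_dot]
  rw [this, eLpNorm_comp_measurePreserving (Lp.aestronglyMeasurable φ) (hmp z.1)]

lemma stft_eq (φ f : Lp ℂ 2 (volume : Measure (Rd d))) (z : TF d) :
    STFT (⇑φ) (⇑f) z = ⟪piSh φ z, f⟫_ℂ := by
  rw [L2.inner_def]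
  have h := (memLp_shift φ z).coeFn_toLp
  rw [STFT]
  refine integral_congr_ae ?_
  filter_upwards [h] with t ht
  rw [RCLike.inner_apply]
  show _ = f t * (starRingEnd ℂ) (piSh φ z t)
  rw [show (piSh φ z) t = tfShift z (⇑φ) t from ht]
  simp only [tfShift, map_mul, ← Complex.exp_conj, map_mul]
  simp [Complex.conj_ofReal, map_ofNat]
  ring

lemma stft_bound (φ f : Lp ℂ 2 (volume : Measure (Rd d))) (z : TF d) :
    ‖STFT (⇑φ) (⇑f) z‖ ≤ ‖φ‖ * ‖f‖ := by
  rw [stft_eq]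
  calc ‖⟪piSh φ z, f⟫_ℂ‖ ≤ ‖piSh φ z‖ * ‖f‖ := norm_inner_le_norm _ _
  _ = ‖φ‖ * ‖f‖ := by rw [norm_piSh]

lemma stft_parseval (φ : Lp ℂ 2 (volume : Measure (Rd d)))
    (b : HilbertBasis ℕ ℂ (Lp ℂ 2 (volume : Measure (Rd d)))) (z : TF d) :
    HasSum (fun i => ‖STFT (⇑φ) (⇑(b i)) z‖ ^ 2) (‖φ‖ ^ 2) := by
  have h := HilbertBasis.hasSum_inner_mul_inner b (piSh φ z) (piSh φ z)
  rw [← Complex.hasSum_ofReal]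
  have h2 : ∀ i : ℕ, ⟪piSh φ z, b i⟫_ℂ * ⟪b i, piSh φ z⟫_ℂ
      = ((‖STFT (⇑φ) (⇑(b i)) z‖ ^ 2 : ℝ) : ℂ) := by
    intro i
    rw [← inner_conj_symm (b i) (piSh φ z), stft_eq, Complex.mul_conj']
    push_cast
    ring
  have h3 : ⟪piSh φ z, piSh φ z⟫_ℂ = ((‖φ‖ ^ 2 : ℝ) : ℂ) := by
    rw [inner_self_eq_norm_sq_to_K, norm_piSh]
    norm_cast
  rw [← h3]
  exact HasSum.congr_fun h (fun i => (h2 i).symm)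

lemma stft_aesm (φ f : Lp ℂ 2 (volume : Measure (Rd d))) :
    AEStronglyMeasurable (fun z : TF d => STFT (⇑φ) (⇑f) z) (volume : Measure (TF d)) := by
  have hφm := Lp.aestronglyMeasurable φ
  have hfm := Lp.aestronglyMeasurable f
  set φ' := hφm.mk ⇑φ with hφ'def
  set f' := hfm.mk ⇑f with hf'def
  have heq : ∀ z : TF d, STFT (⇑φ) (⇑f) z = STFT φ' f' z := by
    intro z
    refine integral_congr_ae ?_
    have h1 : (fun t : Rd d => (⇑φ) (t - z.1)) =ᵐ[volume] fun t => φ' (t - z.1) :=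
      (hmp z.1).quasiMeasurePreserving.ae_eq_comp hφm.ae_eq_mk
    filter_upwards [h1, hfm.ae_eq_mk] with t h1t h2t
    rw [h1t, h2t]
  have hsm : StronglyMeasurable fun p : TF d × Rd d =>
      f' p.2 * (starRingEnd ℂ) (φ' (p.2 - p.1.1)) *
        Complex.exp (-(2 * Real.pi * Complex.I * (dotR p.1.2 p.2))) := by
    have h1 : StronglyMeasurable fun p : TF d × Rd d => f' p.2 :=
      hfm.stronglyMeasurable_mk.comp_measurable measurable_snd
    have h2 : StronglyMeasurable fun p : TF d × Rd d => (starRingEnd ℂ) (φ' (p.2 - p.1.1)) := by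
      exact Complex.continuous_conj.comp_stronglyMeasurable
        (hφm.stronglyMeasurable_mk.comp_measurable (measurable_snd.sub measurable_fst.fst))
    have h3 : Continuous fun p : TF d × Rd d =>
        Complex.exp (-(2 * Real.pi * Complex.I * (dotR p.1.2 p.2))) := by
      apply Complex.continuous_exp.comp
      apply Continuous.neg
      apply continuous_const.mul
      apply Complex.continuous_ofReal.comp
      unfold dotR
      exact continuous_finset_sum _ fun i _ =>
        ((continuous_apply i).comp (continuous_fst.snd)).mul ((continuous_apply i).comp continuous_snd)
    exact (h1.mul h2).mul h3.stronglyMeasurable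
  have := hsm.integral_prod_right' (ν := (volume : Measure (Rd d)))
  refine this.aestronglyMeasurable.congr ?_
  filter_upwards with z using (heq z).symm

end LocAux

open LocAux

/-- for nonnegative `σ ∈ L¹(ℝ^{2d})` and `φ ∈ L²(ℝ^d)`, the localization operator
`H_σ` is a positive trace-class operator on `L²(ℝ^d)` with trace `‖σ‖₁ ‖φ‖₂²`: its quadratic
form is nonnegative, and for every Hilbert basis the diagonal sums converge with sum
`(∫ σ) ‖φ‖₂²`. -/
theorem localization_traceclass (d : ℕ) (σ : TF d → ℝ)
    (hσ : Integrable σ (volume : Measure (TF d))) (hσ0 : ∀ z, 0 ≤ σ z)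
    (φ : Lp ℂ 2 (volume : Measure (Rd d)))
    (H : Lp ℂ 2 (volume : Measure (Rd d)) →L[ℂ] Lp ℂ 2 (volume : Measure (Rd d)))
    (hH : ∀ f g : Lp ℂ 2 (volume : Measure (Rd d)),
      innF (H f) g = ∫ z : TF d, (σ z : ℂ) * STFT (⇑φ) f z * (starRingEnd ℂ) (STFT (⇑φ) g z)) :
    (∀ f : Lp ℂ 2 (volume : Measure (Rd d)),
        0 ≤ (innF (H f) f).re ∧ (innF (H f) f).im = 0) ∧
    (∀ b : HilbertBasis ℕ ℂ (Lp ℂ 2 (volume : Measure (Rd d))),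
        Summable (fun i => (innF (H (b i)) (b i)).re) ∧
        (∑' i, (innF (H (b i)) (b i)).re) = (∫ z : TF d, σ z) * ‖φ‖^2) := by
  have key : ∀ f : Lp ℂ 2 (volume : Measure (Rd d)),
      innF (⇑(H f)) ⇑f = ((∫ z : TF d, σ z * ‖STFT (⇑φ) (⇑f) z‖ ^ 2 : ℝ) : ℂ) := by
    intro f
    rw [hH f f]
    have : ((∫ z : TF d, σ z * ‖STFT (⇑φ) (⇑f) z‖ ^ 2 : ℝ) : ℂ)
        = ∫ z : TF d, ((σ z * ‖STFT (⇑φ) (⇑f) z‖ ^ 2 : ℝ) : ℂ) :=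
      (integral_ofReal (𝕜 := ℂ)).symm
    rw [this]
    refine integral_congr_ae (Filter.Eventually.of_forall fun z => ?_)
    show (σ z : ℂ) * STFT (⇑φ) (⇑f) z * (starRingEnd ℂ) (STFT (⇑φ) (⇑f) z)
        = ((σ z * ‖STFT (⇑φ) (⇑f) z‖ ^ 2 : ℝ) : ℂ)
    rw [mul_assoc, Complex.mul_conj']
    push_cast
    ring
  constructor
  · intro f
    rw [key f]
    refine ⟨?_, Complex.ofReal_im _⟩
    rw [Complex.ofReal_re]
    exact integral_nonneg fun z => mul_nonneg (hσ0 z) (sq_nonneg _)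
  · intro b
    set g : ℕ → TF d → ℝ := fun i z => σ z * ‖STFT (⇑φ) (⇑(b i)) z‖ ^ 2 with hg
    have hb1 : ∀ i, ‖(b i : Lp ℂ 2 (volume : Measure (Rd d)))‖ = 1 := fun i => b.orthonormal.1 i
    have hgnn : ∀ i z, 0 ≤ g i z := fun i z => mul_nonneg (hσ0 z) (sq_nonneg _)
    have hgsm : ∀ i, AEStronglyMeasurable (g i) (volume : Measure (TF d)) := by
      intro i
      have hn := (stft_aesm φ (b i)).norm
      exact hσ.1.mul ((hn.mul hn).congr
        (Filter.Eventually.of_forall fun z => (pow_two _).symm))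
    have hgint : ∀ i, Integrable (g i) (volume : Measure (TF d)) := by
      intro i
      refine Integrable.mono' (hσ.mul_const (‖φ‖ ^ 2)) (hgsm i) ?_
      filter_upwards with z
      rw [Real.norm_eq_abs, _root_.abs_of_nonneg (hgnn i z)]
      calc g i z ≤ σ z * (‖φ‖ * ‖(b i : Lp ℂ 2 (volume : Measure (Rd d)))‖) ^ 2 :=
            mul_le_mul_of_nonneg_left
              (pow_le_pow_left₀ (norm_nonneg _) (stft_bound φ (b i) z) 2) (hσ0 z)
        _ = σ z * ‖φ‖ ^ 2 := by rw [hb1]; ring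
    have hre : ∀ i, (innF (⇑(H (b i))) ⇑(b i)).re = ∫ z, g i z := by
      intro i; rw [key]; exact Complex.ofReal_re _
    have hofReal : ∀ i, ENNReal.ofReal (∫ z, g i z)
        = ∫⁻ z, ENNReal.ofReal (g i z) := fun i =>
      ofReal_integral_eq_lintegral_ofReal (hgint i)
        (Filter.Eventually.of_forall fun z => hgnn i z)
    have hptw : ∀ z, (∑' i, ENNReal.ofReal (g i z)) = ENNReal.ofReal (σ z * ‖φ‖ ^ 2) := by
      intro z
      have hps := stft_parseval φ b z
      calc (∑' i, ENNReal.ofReal (g i z))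
          = ∑' i, ENNReal.ofReal (σ z) * ENNReal.ofReal (‖STFT (⇑φ) (⇑(b i)) z‖ ^ 2) :=
            tsum_congr fun i => ENNReal.ofReal_mul (hσ0 z)
        _ = ENNReal.ofReal (σ z) * ∑' i, ENNReal.ofReal (‖STFT (⇑φ) (⇑(b i)) z‖ ^ 2) :=
            ENNReal.tsum_mul_left
        _ = ENNReal.ofReal (σ z) * ENNReal.ofReal (‖φ‖ ^ 2) := by
            rw [← ENNReal.ofReal_tsum_of_nonneg (fun i => sq_nonneg _) hps.summable,
              hps.tsum_eq]
        _ = ENNReal.ofReal (σ z * ‖φ‖ ^ 2) := (ENNReal.ofReal_mul (hσ0 z)).symm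
    have htot : (∑' i, ∫⁻ z, ENNReal.ofReal (g i z))
        = ENNReal.ofReal ((∫ z : TF d, σ z) * ‖φ‖ ^ 2) := by
      rw [← lintegral_tsum (f := fun i z => ENNReal.ofReal (g i z)) (fun i =>
        ENNReal.measurable_ofReal.comp_aemeasurable (hgsm i).aemeasurable)]
      rw [lintegral_congr hptw,
        ← ofReal_integral_eq_lintegral_ofReal (hσ.mul_const (‖φ‖ ^ 2))
          (Filter.Eventually.of_forall fun z => mul_nonneg (hσ0 z) (sq_nonneg _)),
        integral_mul_const]
    have hfin : (∑' i, ∫⁻ z, ENNReal.ofReal (g i z)) ≠ ⊤ := by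
      rw [htot]; exact ENNReal.ofReal_ne_top
    have hsum : Summable fun i => ∫ z, g i z := by
      refine (ENNReal.summable_toReal hfin).congr fun i => ?_
      rw [← hofReal i, ENNReal.toReal_ofReal (integral_nonneg (hgnn i))]
    constructor
    · exact hsum.congr fun i => (hre i).symm
    · calc (∑' i, (innF (⇑(H (b i))) ⇑(b i)).re) = ∑' i, ∫ z, g i z :=
            tsum_congr hre
        _ = ∑' i, (∫⁻ z, ENNReal.ofReal (g i z)).toReal := by
            refine tsum_congr fun i => ?_
            rw [← hofReal i, ENNReal.toReal_ofReal (integral_nonneg (hgnn i))]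
        _ = (∑' i, ∫⁻ z, ENNReal.ofReal (g i z)).toReal :=
            (ENNReal.tsum_toReal_eq fun i => by
              rw [← hofReal i]; exact ENNReal.ofReal_ne_top).symm
        _ = (∫ z : TF d, σ z) * ‖φ‖ ^ 2 := by
            rw [htot, ENNReal.toReal_ofReal
              (mul_nonneg (integral_nonneg hσ0) (sq_nonneg _))]
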